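/- Let σ ∈ A(δ) be a reflector from Ω̄ to D. If E ⊆ D is closed, then τ_σ(E) is a closed subset of Ω̄; in particular τ_σ(E) is Lebesgue measurable in S². -/

import Mathlib

noncomputable section

open MeasureTheory Metric Set Filter Topology
attribute [local instance] Classical.propDecidable

/-- Real inner product on `ℝ³`. -/
noncomputable def rinner (x y : EuclideanSpace ℝ (Fin 3)) : ℝ := inner ℝ x y

/-- Euclidean 3-space. -/
abbrev E3 : Type := EuclideanSpace ℝ (Fin 3)

/-- The unit sphere `S²` in `ℝ³`. -/
def sphere2 : Set E3 := Metric.sphere (0 : E3) 1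

/-- Unit vector `m = P/OP` in the direction of `P`. -/
noncomputable def axisDir (P : E3) : E3 := ‖P‖⁻¹ • P

/-- Eccentricity `ε = √(1 + d²/OP²) − d/OP` of the ellipsoid `E_d(P)`. -/
noncomputable def ecc (P : E3) (d : ℝ) : ℝ :=
  Real.sqrt (1 + d ^ 2 / ‖P‖ ^ 2) - d / ‖P‖

/-- Polar radius `ρ_d(x) = d/(1 − ε x·m)` of the ellipsoid `E_d(P)`. -/
noncomputable def polarRadius (P : E3) (d : ℝ) (x : E3) : ℝ :=
  d / (1 - ecc P d * rinner x (axisDir P))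

/-- The constant `c_δ = √(1 + δ²) − δ`. -/
noncomputable def cconst (δ : ℝ) : ℝ := Real.sqrt (1 + δ ^ 2) - δ

/-- Outer unit normal `(x − εm)/|x − εm|` of the ellipsoid `E_d(P)` at the point `ρ_d(x)x`. -/
noncomputable def normalVec (P : E3) (d : ℝ) (x : E3) : E3 :=
  ‖x - ecc P d • axisDir P‖⁻¹ • (x - ecc P d • axisDir P)

/-- The ellipsoid `E_d(P)` supports the surface `{ρ(x)x : x ∈ closure Ω}` at `ρ(x₀)x₀`. -/
def IsSupportingAt (Ω : Set E3) (ρ : E3 → ℝ) (P : E3) (d : ℝ) (x₀ : E3) : Prop :=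
  P ≠ 0 ∧ 0 < d ∧ (∀ x ∈ closure Ω, ρ x ≤ polarRadius P d x) ∧
    ρ x₀ = polarRadius P d x₀

/-- `{ρ(x)x : x ∈ closure Ω}` is a reflector from `closure Ω` to the target `D`. -/
def IsReflector (Ω D : Set E3) (ρ : E3 → ℝ) : Prop :=
  (∀ x ∈ closure Ω, 0 < ρ x) ∧
  ∀ x₀ ∈ closure Ω, ∃ P ∈ D, ∃ d : ℝ, IsSupportingAt Ω ρ P d x₀

/-- Tracing set `τ_σ(E)`: directions reflected into `E`. -/
def tracing (Ω : Set E3) (ρ : E3 → ℝ) (E : Set E3) : Set E3 :=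
  {x | x ∈ closure Ω ∧ ∃ P ∈ E, ∃ d : ℝ, IsSupportingAt Ω ρ P d x}

/-- The class `A(δ)`: reflectors all of whose points admit a supporting ellipsoid with
`d ≥ δ M`. -/
def InClassA (Ω D : Set E3) (ρ : E3 → ℝ) (δ M : ℝ) : Prop :=
  IsReflector Ω D ρ ∧
  ∀ x₀ ∈ closure Ω, ∃ P ∈ D, ∃ d : ℝ, δ * M ≤ d ∧ IsSupportingAt Ω ρ P d x₀

/-- The boundary `∂Ω` of `Ω` relative to the sphere `S²`. -/
def sphFrontier (Ω : Set E3) : Set E3 := closure Ω ∩ closure (sphere2 \ Ω)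

/-- `D` is contained in a plane of `ℝ³`. -/
def InPlane (D : Set E3) : Prop :=
  ∃ v : E3, v ≠ 0 ∧ ∃ c : ℝ, ∀ P ∈ D, rinner P v = c

/-- The set `S` of directions traced to two distinct target points. -/
def ambigSet (Ω D : Set E3) (ρ : E3 → ℝ) : Set E3 :=
  {x | x ∈ closure Ω ∧ ∃ P₁ ∈ D, ∃ P₂ ∈ D, P₁ ≠ P₂ ∧
    x ∈ tracing Ω ρ {P₁} ∧ x ∈ tracing Ω ρ {P₂}}

/-- A canonical selection of the outer unit normal `ν(x)` of the reflector; at every point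
where the supporting ellipsoid is unique (a.e. point) this is the normal of the
supporting ellipsoid. -/
noncomputable def nuSel (Ω D : Set E3) (ρ : E3 → ℝ) (x : E3) : E3 :=
  if h : ∃ p : E3 × ℝ, p.1 ∈ D ∧ IsSupportingAt Ω ρ p.1 p.2 x then
    normalVec h.choose.1 h.choose.2 x
  else 0

/-- A canonical selection of the reflector map `𝒩_σ(x)`; at every point with a unique
supporting ellipsoid (a.e. point) this is the target point the ray `x` is reflected to. -/
noncomputable def reflMapSel (Ω D : Set E3) (ρ : E3 → ℝ) (x : E3) : E3 :=
  if h : ∃ p : E3 × ℝ, p.1 ∈ D ∧ IsSupportingAt Ω ρ p.1 p.2 x then h.choose.1 else 0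

/-- The reflector measure `μ(E) = ∫_{τ_σ(E)} f(x) (x·ν(x))/ρ(x)² dx`,
the irradiance received on `E ⊆ D`. -/
noncomputable def reflMeasure (Ω D : Set E3) (ρ f : E3 → ℝ) (E : Set E3) : ℝ :=
  ∫ x in tracing Ω ρ E, f x * rinner x (nuSel Ω D ρ x) / ρ x ^ 2 ∂μH[2]

/-!
Let `x_n → x₀` with `x_n` traced to foci `P_n ∈ E` by ellipsoids `E_{d_n}(P_n)`. A single
supporting ellipsoid at `x₀` bounds `ρ`, and `d_n ≤ 2 ρ(x_n)`, so after passing to a subsequence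
`P_n → Q ∈ E` and `d_n → d₀`. If `d₀ > 0`, the supporting inequalities pass to the limit, and
the contact `ρ(x₀) = ρ_{d₀}(x₀)` follows by squeezing `ρ(x_n) = ρ_{d_n}(x_n)` between the limit
ellipsoid and the supporting ellipsoid at `x₀`. If `d₀ = 0`, the ellipsoids collapse onto the
segment `OQ`, which forces every direction of `Ω̄` to be `Q/|Q|`; then `Ω̄` is a single point.
-/

section Ellipsoid

variable {P : E3} {d : ℝ} {x : E3}

lemma norm_eq_one_of_mem_closure {Ω : Set E3} (hΩ : Ω ⊆ sphere2) (hx : x ∈ closure Ω) :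
    ‖x‖ = 1 :=
  mem_sphere_zero_iff_norm.1 (closure_minimal hΩ isClosed_sphere hx)

lemma norm_axisDir (hP : P ≠ 0) : ‖axisDir P‖ = 1 := by
  rw [axisDir, norm_smul, norm_inv, norm_norm, inv_mul_cancel₀ (norm_ne_zero_iff.2 hP)]

lemma abs_rinner_axisDir_le_one (hx : ‖x‖ = 1) (hP : P ≠ 0) : |rinner x (axisDir P)| ≤ 1 := by
  simpa [rinner, hx, norm_axisDir hP] using abs_real_inner_le_norm x (axisDir P)

lemma ecc_pos : 0 < ecc P d := by
  rw [ecc, ← div_pow, sub_pos]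
  refine (le_abs_self _).trans_lt ((Real.lt_sqrt (abs_nonneg _)).2 ?_)
  rw [sq_abs]
  linarith

lemma ecc_lt_one (hP : P ≠ 0) (hd : 0 < d) : ecc P d < 1 := by
  have ht : 0 < d / ‖P‖ := div_pos hd (norm_pos_iff.2 hP)
  have hsqrt : Real.sqrt (1 + (d / ‖P‖) ^ 2) < 1 + d / ‖P‖ :=
    (Real.sqrt_lt' (by linarith)).2 (by nlinarith)
  rw [ecc, ← div_pow]
  linarith

lemma one_sub_ecc_le_one_sub_ecc_mul (hx : ‖x‖ = 1) (hP : P ≠ 0) :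
    1 - ecc P d ≤ 1 - ecc P d * rinner x (axisDir P) := by
  have h := le_of_abs_le (abs_rinner_axisDir_le_one hx hP)
  nlinarith [ecc_pos (P := P) (d := d)]

lemma one_sub_ecc_mul_pos (hx : ‖x‖ = 1) (hP : P ≠ 0) (hd : 0 < d) :
    0 < 1 - ecc P d * rinner x (axisDir P) :=
  (sub_pos.2 (ecc_lt_one hP hd)).trans_le (one_sub_ecc_le_one_sub_ecc_mul hx hP)

lemma one_sub_ecc_mul_le_two (hx : ‖x‖ = 1) (hP : P ≠ 0) (hd : 0 < d) :
    1 - ecc P d * rinner x (axisDir P) ≤ 2 := by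
  have h := abs_le.1 (abs_rinner_axisDir_le_one hx hP)
  nlinarith [ecc_pos (P := P) (d := d), ecc_lt_one hP hd]

lemma polarRadius_le (hx : ‖x‖ = 1) (hP : P ≠ 0) (hd : 0 < d) :
    polarRadius P d x ≤ d / (1 - ecc P d) :=
  div_le_div_of_nonneg_left hd.le (sub_pos.2 (ecc_lt_one hP hd))
    (one_sub_ecc_le_one_sub_ecc_mul hx hP)

lemma le_two_mul_polarRadius (hx : ‖x‖ = 1) (hP : P ≠ 0) (hd : 0 < d) :
    d ≤ 2 * polarRadius P d x := by
  have h : d / 2 ≤ polarRadius P d x :=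
    div_le_div_of_nonneg_left hd.le (one_sub_ecc_mul_pos hx hP hd)
      (one_sub_ecc_mul_le_two hx hP hd)
  linarith

end Ellipsoid

section Limits

variable {α : Type*} {l : Filter α} {P : α → E3} {d : α → ℝ} {x : α → E3}
  {Q x₀ : E3} {d₀ : ℝ}

lemma tendsto_axisDir (hQ : Q ≠ 0) (hP : Tendsto P l (𝓝 Q)) :
    Tendsto (fun i => axisDir (P i)) l (𝓝 (axisDir Q)) :=
  (hP.norm.inv₀ (norm_ne_zero_iff.2 hQ)).smul hP

lemma tendsto_ecc (hQ : Q ≠ 0) (hP : Tendsto P l (𝓝 Q)) (hd : Tendsto d l (𝓝 d₀)) :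
    Tendsto (fun i => ecc (P i) (d i)) l (𝓝 (ecc Q d₀)) := by
  have hQn : ‖Q‖ ≠ 0 := norm_ne_zero_iff.2 hQ
  have hfrac := (hd.pow 2).div (hP.norm.pow 2) (pow_ne_zero 2 hQn)
  exact ((Real.continuous_sqrt.tendsto _).comp (tendsto_const_nhds.add hfrac)).sub
    (hd.div hP.norm hQn)

lemma tendsto_one_sub_ecc_mul_rinner (hQ : Q ≠ 0) (hP : Tendsto P l (𝓝 Q))
    (hd : Tendsto d l (𝓝 d₀)) (hx : Tendsto x l (𝓝 x₀)) :
    Tendsto (fun i => 1 - ecc (P i) (d i) * rinner (x i) (axisDir (P i))) l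
      (𝓝 (1 - ecc Q d₀ * rinner x₀ (axisDir Q))) :=
  tendsto_const_nhds.sub ((tendsto_ecc hQ hP hd).mul (hx.inner (tendsto_axisDir hQ hP)))

lemma tendsto_polarRadius (hQ : Q ≠ 0) (hP : Tendsto P l (𝓝 Q)) (hd : Tendsto d l (𝓝 d₀))
    (hx : Tendsto x l (𝓝 x₀)) (hx₀ : ‖x₀‖ = 1) (hd₀ : 0 < d₀) :
    Tendsto (fun i => polarRadius (P i) (d i) (x i)) l (𝓝 (polarRadius Q d₀ x₀)) :=
  hd.div (tendsto_one_sub_ecc_mul_rinner hQ hP hd hx) (one_sub_ecc_mul_pos hx₀ hQ hd₀).ne'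

lemma eq_axisDir_of_le_polarRadius [l.NeBot] {y : E3} {r : ℝ} (hQ : Q ≠ 0)
    (hPQ : Tendsto P l (𝓝 Q)) (hd0 : Tendsto d l (𝓝 0)) (hP : ∀ i, P i ≠ 0)
    (hd : ∀ i, 0 < d i) (hy : ‖y‖ = 1) (hr : 0 < r) (hle : ∀ i, r ≤ polarRadius (P i) (d i) y) :
    y = axisDir Q := by
  have hden_le : ∀ i, 1 - ecc (P i) (d i) * rinner y (axisDir (P i)) ≤ d i / r := fun i => by
    rw [le_div_iff₀ hr, mul_comm]
    exact (le_div_iff₀ (one_sub_ecc_mul_pos hy (hP i) (hd i))).1 (hle i)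
  have hden_zero : Tendsto (fun i => 1 - ecc (P i) (d i) * rinner y (axisDir (P i))) l (𝓝 0) :=
    squeeze_zero (fun i => (one_sub_ecc_mul_pos hy (hP i) (hd i)).le) hden_le
      (by simpa using hd0.div_const r)
  have hlim := tendsto_nhds_unique
    (tendsto_one_sub_ecc_mul_rinner hQ hPQ hd0 tendsto_const_nhds) hden_zero
  have hecc : ecc Q 0 = 1 := by simp [ecc]
  rw [hecc, one_mul, sub_eq_zero] at hlim
  exact (inner_eq_one_iff_of_norm_eq_one hy (norm_axisDir hQ)).1 hlim.symm

end Limits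

section Supporting

variable {Ω : Set E3} {ρ : E3 → ℝ} {P : E3} {d : ℝ} {x₀ : E3}

lemma IsSupportingAt.le_div (hΩ : Ω ⊆ sphere2) (hs : IsSupportingAt Ω ρ P d x₀) {x : E3}
    (hx : x ∈ closure Ω) : ρ x ≤ d / (1 - ecc P d) :=
  (hs.2.2.1 x hx).trans (polarRadius_le (norm_eq_one_of_mem_closure hΩ hx) hs.1 hs.2.1)

lemma IsSupportingAt.le_two_mul (hΩ : Ω ⊆ sphere2) (hs : IsSupportingAt Ω ρ P d x₀)
    (hx₀ : x₀ ∈ closure Ω) : d ≤ 2 * ρ x₀ :=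
  hs.2.2.2 ▸ le_two_mul_polarRadius (norm_eq_one_of_mem_closure hΩ hx₀) hs.1 hs.2.1

lemma IsSupportingAt.of_tendsto {α : Type*} {l : Filter α} [l.NeBot] {Pᵢ : α → E3}
    {dᵢ : α → ℝ} {u : α → E3} {Q : E3} {d₀ : ℝ} (hΩ : Ω ⊆ sphere2)
    (hs : ∀ i, IsSupportingAt Ω ρ (Pᵢ i) (dᵢ i) (u i)) (hu : ∀ i, u i ∈ closure Ω)
    (hs₀ : IsSupportingAt Ω ρ P d x₀) (hQ : Q ≠ 0) (hd₀ : 0 < d₀)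
    (hPQ : Tendsto Pᵢ l (𝓝 Q)) (hdd₀ : Tendsto dᵢ l (𝓝 d₀)) (hux₀ : Tendsto u l (𝓝 x₀)) :
    IsSupportingAt Ω ρ Q d₀ x₀ := by
  have hx₀ : x₀ ∈ closure Ω := isClosed_closure.mem_of_tendsto hux₀ (.of_forall hu)
  have hx₀1 := norm_eq_one_of_mem_closure hΩ hx₀
  have hle : ∀ x ∈ closure Ω, ρ x ≤ polarRadius Q d₀ x := fun x hx =>
    ge_of_tendsto (tendsto_polarRadius hQ hPQ hdd₀ tendsto_const_nhds
      (norm_eq_one_of_mem_closure hΩ hx) hd₀) (.of_forall fun i => (hs i).2.2.1 x hx)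
  have hge : polarRadius Q d₀ x₀ ≤ ρ x₀ := by
    rw [hs₀.2.2.2]
    refine le_of_tendsto_of_tendsto' (tendsto_polarRadius hQ hPQ hdd₀ hux₀ hx₀1 hd₀)
      (tendsto_polarRadius hs₀.1 tendsto_const_nhds tendsto_const_nhds hux₀ hx₀1 hs₀.2.1)
      fun i => ?_
    rw [← (hs i).2.2.2]
    exact hs₀.2.2.1 _ (hu i)
  exact ⟨hQ, hd₀, hle, (hle x₀ hx₀).antisymm hge⟩

end Supporting

namespace IsReflector

variable {Ω D E : Set E3} {ρ : E3 → ℝ}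

lemma mem_tracing_of_tendsto (hΩ : Ω ⊆ sphere2) (hρ : IsReflector Ω D ρ) (hE : IsCompact E)
    (h0 : (0 : E3) ∉ E) {u : ℕ → E3} {x₀ : E3} (hu : ∀ n, u n ∈ tracing Ω ρ E)
    (hux₀ : Tendsto u atTop (𝓝 x₀)) : x₀ ∈ tracing Ω ρ E := by
  have huΩ : ∀ n, u n ∈ closure Ω := fun n => (hu n).1
  have hx₀ : x₀ ∈ closure Ω := isClosed_closure.mem_of_tendsto hux₀ (.of_forall huΩ)
  obtain ⟨P', -, d', hs₀⟩ := hρ.2 x₀ hx₀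
  choose P hPE d hs using fun n => (hu n).2
  have hd_mem : ∀ n, d n ∈ Icc 0 (2 * (d' / (1 - ecc P' d'))) := fun n =>
    ⟨(hs n).2.1.le, ((hs n).le_two_mul hΩ (huΩ n)).trans
      (mul_le_mul_of_nonneg_left (hs₀.le_div hΩ (huΩ n)) zero_le_two)⟩
  obtain ⟨Q, hQE, φ, hφ, hPQ⟩ := hE.tendsto_subseq hPE
  obtain ⟨d₀, hd₀, ψ, hψ, hdd₀⟩ := isCompact_Icc.tendsto_subseq fun n => hd_mem (φ n)
  have hQ : Q ≠ 0 := ne_of_mem_of_not_mem hQE h0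
  have hPQ' := hPQ.comp hψ.tendsto_atTop
  rcases hd₀.1.eq_or_lt with rfl | hd₀_pos
  · have hΩ_axis : ∀ x ∈ closure Ω, x = axisDir Q := fun x hx =>
      eq_axisDir_of_le_polarRadius hQ hPQ' hdd₀ (fun n => (hs _).1) (fun n => (hs _).2.1)
        (norm_eq_one_of_mem_closure hΩ hx) (hρ.1 x hx) fun n => (hs _).2.2.1 x hx
    rw [hΩ_axis x₀ hx₀, ← hΩ_axis _ (huΩ 0)]
    exact hu 0
  · exact ⟨hx₀, Q, hQE, d₀, IsSupportingAt.of_tendsto hΩ (fun n => hs _) (fun n => huΩ _) hs₀ hQ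
      hd₀_pos hPQ' hdd₀ (hux₀.comp (hφ.comp hψ).tendsto_atTop)⟩

lemma isClosed_tracing (hΩ : Ω ⊆ sphere2) (hρ : IsReflector Ω D ρ) (hE : IsCompact E)
    (h0 : (0 : E3) ∉ E) : IsClosed (tracing Ω ρ E) :=
  IsSeqClosed.isClosed fun _ _ hu hux₀ => hρ.mem_tracing_of_tendsto hΩ hE h0 hu hux₀

end IsReflector

theorem tracing_isClosed_of_closed_general
    (Ω : Set E3) (hΩ : Ω ⊆ sphere2)
    (D : Set E3) (hD : IsCompact D) (hO : (0 : E3) ∉ D)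
    (M : ℝ)
    (δ : ℝ)
    (ρ : E3 → ℝ) (hσ : InClassA Ω D ρ δ M)
    (E : Set E3) (hE : E ⊆ D) (hEcl : IsClosed E) :
    IsClosed (tracing Ω ρ E) ∧ NullMeasurableSet (tracing Ω ρ E) μH[2] := by
  have hclosed : IsClosed (tracing Ω ρ E) :=
    hσ.1.isClosed_tracing hΩ (hD.of_isClosed_subset hEcl hE) fun h => hO (hE h)
  exact ⟨hclosed, hclosed.measurableSet.nullMeasurableSet⟩

/-- For a reflector `σ ∈ A(δ)`, the tracing set of a closed subset
`E ⊆ D` is closed; in particular it is Lebesgue measurable for the surface measure. -/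
theorem tracing_isClosed_of_closed
    (Ω : Set E3) (hΩ : Ω ⊆ sphere2) (hfr : μH[2] (sphFrontier Ω) = 0)
    (D : Set E3) (hD : IsCompact D) (hO : (0 : E3) ∉ D)
    (M : ℝ) (hM : IsGreatest ((fun p : E3 => ‖p‖) '' D) M)
    (δ : ℝ) (hδ : 0 < δ)
    (ρ : E3 → ℝ) (hσ : InClassA Ω D ρ δ M)
    (E : Set E3) (hE : E ⊆ D) (hEcl : IsClosed E) :
    IsClosed (tracing Ω ρ E) ∧ NullMeasurableSet (tracing Ω ρ E) μH[2] :=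
  tracing_isClosed_of_closed_general Ω hΩ D hD hO M δ ρ hσ E hE hEcl
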